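/- Every equilibrium of the PI distributed-optimization dynamics is a global minimum of the constrained problem: if z* : V → (Fin n → ℝ) and μ* : E → (Fin n → ℝ) satisfy k_G ∇f(z*) + k_P (L z*) + k_I' (D μ*) = 0 and Dᵀ z* = 0, then z* is a consensus state and f(z*) ≤ f(z) for every consensus state z : V → (Fin n → ℝ). -/

import Mathlib

/-!
Since `L = D Dᵀ`, the kernels of `L` and `Dᵀ` coincide (`⟨x, D Dᵀ x⟩ = ‖Dᵀ x‖²`), and for a
connected graph the kernel of `L` consists of the constant vectors; so, column by column, the
consensus states are exactly `ker Dᵀ`. In particular `Dᵀ z* = 0` makes `z*` a consensus state.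
Pairing the equilibrium equation with `w ∈ ker Dᵀ` kills the proportional and the integral
term, as both lie in the range of `D` and `⟨D u, w⟩ = ⟨u, Dᵀ w⟩ = 0`. Hence `∇f(z*) ⊥ ker Dᵀ`,
and the first-order inequality `f z ≥ f z* + ⟨∇f(z*), z - z*⟩` for convex `f` concludes.
-/

open Matrix

theorem ConvexOn.add_fderiv_sub_le {F : Type*} [NormedAddCommGroup F] [NormedSpace ℝ F]
    {s : Set F} {f : F → ℝ} {f' : F →L[ℝ] ℝ} {x y : F} (hf : ConvexOn ℝ s f) (hx : x ∈ s)
    (hy : y ∈ s) (hf' : HasFDerivAt f f' x) : f x + f' (y - x) ≤ f y := by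
  set ℓ : ℝ →ᵃ[ℝ] F := AffineMap.lineMap x y
  have hconv : ConvexOn ℝ (Set.Icc 0 1) (f ∘ ℓ) :=
    (hf.comp_affineMap ℓ).subset (hf.1.mapsTo_lineMap hx hy) (convex_Icc 0 1)
  have hderiv : HasDerivAt (f ∘ ℓ) (f' (y - x)) 0 := by
    refine HasFDerivAt.comp_hasDerivAt (0 : ℝ) ?_ AffineMap.hasDerivAt_lineMap
    simpa only [ℓ, AffineMap.lineMap_apply_zero] using hf'
  have hslope := hconv.le_slope_of_hasDerivAt (Set.left_mem_Icc.2 zero_le_one)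
    (Set.right_mem_Icc.2 zero_le_one) zero_lt_one hderiv
  simp only [slope_def_field, Function.comp_apply, ℓ, AffineMap.lineMap_apply_one,
    AffineMap.lineMap_apply_zero, sub_zero, div_one] at hslope
  linarith

theorem ConvexOn.le_of_fderiv_sub_eq_zero {F : Type*} [NormedAddCommGroup F] [NormedSpace ℝ F]
    {f : F → ℝ} {x y : F} (hf : ConvexOn ℝ Set.univ f) (hdiff : DifferentiableAt ℝ f x)
    (hxy : fderiv ℝ f x (y - x) = 0) : f x ≤ f y := by
  simpa [hxy] using hf.add_fderiv_sub_le (Set.mem_univ x) (Set.mem_univ y) hdiff.hasFDerivAt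

section

variable {V E : Type*} [Fintype V] [Fintype E]

theorem Matrix.mul_transpose_mulVec_eq_zero_iff {R : Type*} [CommRing R] [LinearOrder R]
    [IsStrictOrderedRing R] (D : Matrix V E R) (x : V → R) :
    (D * Dᵀ) *ᵥ x = 0 ↔ Dᵀ *ᵥ x = 0 := by
  refine ⟨fun h => ?_, fun h => by rw [← mulVec_mulVec, h, mulVec_zero]⟩
  have := congrArg (x ⬝ᵥ ·) h
  rwa [← mulVec_mulVec, dotProduct_mulVec, ← mulVec_transpose, dotProduct_zero,
    dotProduct_self_eq_zero] at this

theorem Matrix.sum_sum_mul_eq_zero_of_stationary {κ : Type*} [Fintype κ] (D : Matrix V E ℝ)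
    {kG : ℝ} (kP kI : ℝ) (hkG : kG ≠ 0) {g z : V → κ → ℝ} {μ : E → κ → ℝ}
    (hstat : (fun i k => kG * g i k + kP * (∑ j, (D * Dᵀ) i j * z j k)
      + kI * ∑ e, D i e * μ e k) = (0 : V → κ → ℝ))
    {w : V → κ → ℝ} (hw : ∀ k, Dᵀ *ᵥ (fun i => w i k) = 0) :
    ∑ i, ∑ k, g i k * w i k = 0 := by
  have hrange : ∀ k (u : E → ℝ), D *ᵥ u ⬝ᵥ (fun i => w i k) = 0 := fun k u => by
    rw [dotProduct_comm, dotProduct_mulVec, ← mulVec_transpose, hw k, zero_dotProduct]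
  rw [Finset.sum_comm]
  refine Finset.sum_eq_zero fun k _ => ?_
  have hcol : kG • (fun i => g i k) + kP • (D *ᵥ (Dᵀ *ᵥ fun i => z i k))
      + kI • (D *ᵥ fun e => μ e k) = 0 := by
    rw [mulVec_mulVec]
    exact funext fun i => congrFun (congrFun hstat i) k
  have hpair := congrArg (· ⬝ᵥ fun i => w i k) hcol
  simp only [add_dotProduct, smul_dotProduct, hrange, smul_eq_mul, mul_zero, add_zero,
    zero_dotProduct] at hpair
  exact (mul_eq_zero.1 hpair).resolve_left hkG

theorem SimpleGraph.Connected.transpose_mulVec_eq_zero_iff [DecidableEq V] {G : SimpleGraph V}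
    [DecidableRel G.Adj] (hG : G.Connected) {D : Matrix V E ℝ} (hD : D * Dᵀ = G.lapMatrix ℝ)
    (x : V → ℝ) : Dᵀ *ᵥ x = 0 ↔ ∀ i j, x i = x j := by
  rw [← mul_transpose_mulVec_eq_zero_iff, hD, G.lapMatrix_mulVec_eq_zero_iff_forall_reachable]
  exact forall₂_congr fun i j => ⟨fun h => h (hG i j), fun h _ => h⟩

end

theorem pi_distributed_equilibrium_is_global_min_general
    {V E : Type*} [Fintype V] [Fintype E] [DecidableEq V]
    (G : SimpleGraph V) [DecidableRel G.Adj] (hG : G.Connected)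
    (D : Matrix V E ℝ) (hD : D * Dᵀ = G.lapMatrix ℝ)
    (n : ℕ)
    (f : (V → Fin n → ℝ) → ℝ)
    (hconv : ConvexOn ℝ Set.univ f) (hdiff : Differentiable ℝ f)
    (gradf : (V → Fin n → ℝ) → (V → Fin n → ℝ))
    (hgrad : ∀ x u, fderiv ℝ f x u = ∑ i, ∑ k, gradf x i k * u i k)
    (kG kP kI : ℝ) (hkG : 0 < kG)
    (zs : V → Fin n → ℝ) (μs : E → Fin n → ℝ)
    (hstat : (fun i k => kG * gradf zs i k + kP * (∑ j, G.lapMatrix ℝ i j * zs j k)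
      + kI * ∑ e, D i e * μs e k) = (0 : V → Fin n → ℝ))
    (hcons : (fun e k => ∑ i, D i e * zs i k) = (0 : E → Fin n → ℝ)) :
    (∀ i j, zs i = zs j) ∧
    ∀ z : V → Fin n → ℝ, (∀ i j, z i = z j) → f zs ≤ f z := by
  have hker := hG.transpose_mulVec_eq_zero_iff hD
  have hzs : ∀ i j, zs i = zs j := fun i j =>
    funext fun k => (hker _).1 (funext fun e => congrFun (congrFun hcons e) k) i j
  refine ⟨hzs, fun z hz => hconv.le_of_fderiv_sub_eq_zero (hdiff zs) ?_⟩
  rw [hgrad]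
  refine sum_sum_mul_eq_zero_of_stationary D kP kI hkG.ne' (hD ▸ hstat) fun k => ?_
  refine (hker _).2 fun i j => ?_
  simp only [Pi.sub_apply, hz i j, hzs i j]

/-- Every equilibrium of the PI distributed-optimization dynamics is a
global minimum of the consensus-constrained problem: if
`k_G ∇f(z*) + k_P (L z*) + k_I' (D μ*) = 0` and `Dᵀ z* = 0`, then `z*` is a consensus
state and `f(z*) ≤ f(z)` for every consensus state `z`. -/
theorem pi_distributed_equilibrium_is_global_min
    {V E : Type*} [Fintype V] [Fintype E] [Nonempty V] [Nonempty E] [DecidableEq V]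
    (G : SimpleGraph V) [DecidableRel G.Adj] (hG : G.Connected)
    (D : Matrix V E ℝ) (hD : D * Dᵀ = G.lapMatrix ℝ)
    (n : ℕ) (hn : 1 ≤ n)
    (f : (V → Fin n → ℝ) → ℝ)
    (hconv : ConvexOn ℝ Set.univ f) (hdiff : Differentiable ℝ f)
    (gradf : (V → Fin n → ℝ) → (V → Fin n → ℝ))
    (hgrad : ∀ x u, fderiv ℝ f x u = ∑ i, ∑ k, gradf x i k * u i k)
    (kG kP kI : ℝ) (hkG : 0 < kG) (hkP : 0 < kP) (hkI : 0 < kI)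
    (zs : V → Fin n → ℝ) (μs : E → Fin n → ℝ)
    (hstat : (fun i k => kG * gradf zs i k + kP * (∑ j, G.lapMatrix ℝ i j * zs j k)
      + kI * ∑ e, D i e * μs e k) = (0 : V → Fin n → ℝ))
    (hcons : (fun e k => ∑ i, D i e * zs i k) = (0 : E → Fin n → ℝ)) :
    (∀ i j, zs i = zs j) ∧
    ∀ z : V → Fin n → ℝ, (∀ i j, z i = z j) → f zs ≤ f z :=
  pi_distributed_equilibrium_is_global_min_general G hG D hD n f hconv hdiff gradf hgrad kG kP kI
    hkG zs μs hstat hcons
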